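/- arXiv:1302.0133 — 3 statements merged into one kernel-verified Lean document; each statement's English description precedes it below -/
import Mathlib

section
/- Let n ≥ 2 be even and a ∈ {1,2}. In the graded ring R = ℤ[x₁,x₂]/⟨x₁^{n+1}, x₂(a·x₁+x₂)⟩ (generators in degree 2), the group of graded ring automorphisms consists of exactly the four maps given on (x₁,x₂) by the matrices I, −I, (1,0;−a,−1), (−1,0;a,1), and it is isomorphic to ℤ/2 × ℤ/2. -/
open MvPolynomial

/-- `R = ℤ[x₁,x₂]/⟨x₁^{n+1}, x₂(a·x₁+x₂)⟩`, the integral cohomology ring of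
`ℂP^{n+1}_a # conj(ℂP^{n+1}_a)`, with both generators in degree 2. -/
noncomputable abbrev Rq (n : ℕ) (a : ℤ) : Type :=
  MvPolynomial (Fin 2) ℤ ⧸
    Ideal.span ({(X 0 : MvPolynomial (Fin 2) ℤ) ^ (n + 1),
      X 1 * (C a * X 0 + X 1)} : Set (MvPolynomial (Fin 2) ℤ))

noncomputable def x₁ (n : ℕ) (a : ℤ) : Rq n a := Ideal.Quotient.mk _ (X 0)

noncomputable def x₂ (n : ℕ) (a : ℤ) : Rq n a := Ideal.Quotient.mk _ (X 1)

/-- A ring automorphism of `R` is graded iff it preserves the degree-2 part,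
which is the free abelian group spanned by `x₁, x₂`. -/
def IsGraded (n : ℕ) (a : ℤ) (φ : RingAut (Rq n a)) : Prop :=
  φ (x₁ n a) ∈ Submodule.span ℤ ({x₁ n a, x₂ n a} : Set (Rq n a)) ∧
  φ (x₂ n a) ∈ Submodule.span ℤ ({x₁ n a, x₂ n a} : Set (Rq n a))

/-!
Coefficients of the monomials `x₁ᵏ x₂ⁱ` (`k ≤ n`, `i ≤ 1`) are read off through the map to the
model `ℤ[t]/(tⁿ⁺¹)[y]/(y (y + a t))`, which has these monomials as a basis over `ℤ`.
Let a graded automorphism `φ` send `x₁ ↦ α x₁ + β x₂` and `x₂ ↦ γ x₁ + δ x₂`.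
Because `x₂ (α x₁ + β x₂) = (α - aβ) x₁ x₂`, the coefficient of `x₁ⁿ x₂` in `a φ(x₁)ⁿ⁺¹ = 0` is
`αⁿ⁺¹ - (α - aβ)ⁿ⁺¹`; as `n + 1` is odd, `β = 0`. Surjectivity of `φ` forces `α, δ = ±1`,
and the coefficient of `x₁ x₂` in `φ(x₂) (a φ(x₁) + φ(x₂)) = 0` is `δ (aα + 2γ - aδ)`,
which leaves the four matrices. They are realised by `-1` and the involution
`x₂ ↦ -a x₁ - x₂`, which commute and generate a Klein four-group.
-/

def involutionHom {G : Type*} [Group G] (g : G) (hg : g ^ 2 = 1) :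
    Multiplicative (ZMod 2) →* G where
  toFun p := g ^ p.toAdd.val
  map_one' := by simp
  map_mul' p q := by
    rw [toAdd_mul, ZMod.val_add, ← pow_eq_pow_mod _ hg, pow_add]

lemma multiplicative_zmod_two_prod_cases (p : Multiplicative (ZMod 2 × ZMod 2)) :
    p = .ofAdd (0, 0) ∨ p = .ofAdd (1, 0) ∨ p = .ofAdd (0, 1) ∨ p = .ofAdd (1, 1) := by
  revert p
  decide

namespace Rq

variable {n : ℕ} {a : ℤ}

lemma x₁_pow_succ : x₁ n a ^ (n + 1) = 0 := by
  rw [x₁, ← map_pow, Ideal.Quotient.eq_zero_iff_mem]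
  exact Ideal.subset_span (by simp)

lemma x₂_mul : x₂ n a * (a * x₁ n a + x₂ n a) = 0 := by
  have hC : (a : Rq n a) = Ideal.Quotient.mk _ (C a) := by simp
  rw [x₁, x₂, hC, ← map_mul, ← map_add, ← map_mul, Ideal.Quotient.eq_zero_iff_mem]
  exact Ideal.subset_span (by simp)

section lift

variable {S : Type*} [CommRing S]

noncomputable def lift (u v : S) (hu : u ^ (n + 1) = 0) (hv : v * (a * u + v) = 0) :
    Rq n a →+* S :=
  Ideal.Quotient.lift _ (aeval ![u, v]).toRingHom fun p hp => by
    rw [← RingHom.mem_ker]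
    refine Ideal.span_le.2 ?_ hp
    rintro _ (rfl | rfl) <;> simp [hu, hv]

@[simp]
lemma lift_x₁ (u v : S) (hu hv) : lift (n := n) (a := a) u v hu hv (x₁ n a) = u := by
  simp [lift, x₁]

@[simp]
lemma lift_x₂ (u v : S) (hu hv) : lift (n := n) (a := a) u v hu hv (x₂ n a) = v := by
  simp [lift, x₂]

lemma ringHom_ext {f g : Rq n a →+* S} (h₁ : f (x₁ n a) = g (x₁ n a))
    (h₂ : f (x₂ n a) = g (x₂ n a)) : f = g := by
  refine Ideal.Quotient.ringHom_ext (MvPolynomial.ringHom_ext (fun r => ?_) fun i => ?_)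
  · exact RingHom.congr_fun (RingHom.ext_int ((f.comp _).comp C) ((g.comp _).comp C)) r
  · fin_cases i
    exacts [h₁, h₂]

end lift

lemma ringAut_ext {φ ψ : RingAut (Rq n a)} (h₁ : φ (x₁ n a) = ψ (x₁ n a))
    (h₂ : φ (x₂ n a) = ψ (x₂ n a)) : φ = ψ :=
  RingEquiv.toRingHom_injective (ringHom_ext h₁ h₂)

abbrev TruncPoly (n : ℕ) : Type := AdjoinRoot (Polynomial.X ^ (n + 1) : Polynomial ℤ)

instance : Nontrivial (TruncPoly n) :=
  AdjoinRoot.nontrivial _ (by rw [Polynomial.degree_X_pow]; exact_mod_cast n.succ_ne_zero)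

noncomputable def modelPoly (n : ℕ) (a : ℤ) : Polynomial (TruncPoly n) :=
  Polynomial.X * (Polynomial.X + Polynomial.C ((a : TruncPoly n) * AdjoinRoot.root _))

lemma modelPoly_monic : (modelPoly n a).Monic :=
  Polynomial.monic_X.mul (Polynomial.monic_X_add_C _)

abbrev Model (n : ℕ) (a : ℤ) : Type := AdjoinRoot (modelPoly n a)

noncomputable def toModel : Rq n a →+* Model n a :=
  lift (algebraMap (TruncPoly n) _ (AdjoinRoot.root _)) (AdjoinRoot.root _)
    (by rw [← map_pow, ← AdjoinRoot.mk_X, ← map_pow, AdjoinRoot.mk_self, map_zero])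
    (by
      have h : AdjoinRoot.mk (modelPoly n a) (Polynomial.X * (Polynomial.X +
          Polynomial.C ((a : TruncPoly n) * AdjoinRoot.root _))) = 0 := AdjoinRoot.mk_self
      simp only [map_mul, map_add, AdjoinRoot.mk_X, AdjoinRoot.mk_C, map_intCast] at h
      rw [← h, AdjoinRoot.algebraMap_eq]
      ring)

lemma toModel_x₁_pow_mul_x₂_pow (m l : ℕ) :
    toModel (x₁ n a ^ m * x₂ n a ^ l) =
      AdjoinRoot.mk _ (Polynomial.C (AdjoinRoot.root _ ^ m) * Polynomial.X ^ l) := by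
  simp [toModel, AdjoinRoot.algebraMap_eq]

/-- The coefficient of `x₁ᵏ x₂ⁱ`, computed in `Model n a` by reducing modulo the two monic
polynomials. -/
noncomputable def coeff (k i : ℕ) : Rq n a →ₗ[ℤ] ℤ :=
  Polynomial.lcoeff ℤ k ∘ₗ AdjoinRoot.modByMonicHom (Polynomial.monic_X_pow (n + 1)) ∘ₗ
    (Polynomial.lcoeff (TruncPoly n) i ∘ₗ
      AdjoinRoot.modByMonicHom modelPoly_monic).restrictScalars ℤ ∘ₗ
    (toModel (n := n) (a := a)).toIntAlgHom.toLinearMap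

lemma coeff_x₁_pow_mul_x₂_pow (k i : ℕ) {m l : ℕ} (hm : m ≤ n) (hl : l ≤ 1) :
    coeff k i (x₁ n a ^ m * x₂ n a ^ l) = if k = m ∧ i = l then 1 else 0 := by
  have hdeg : (Polynomial.C (AdjoinRoot.root _ ^ m : TruncPoly n) * Polynomial.X ^ l).degree <
      (modelPoly n a).degree := by
    refine Polynomial.degree_lt_degree ((Polynomial.natDegree_C_mul_X_pow_le _ _).trans_lt ?_)
    rw [modelPoly, Polynomial.monic_X.natDegree_mul (Polynomial.monic_X_add_C _),
      Polynomial.natDegree_X, Polynomial.natDegree_X_add_C]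
    omega
  have hdegA : (Polynomial.X ^ m : Polynomial ℤ).degree <
      (Polynomial.X ^ (n + 1) : Polynomial ℤ).degree := by
    simp only [Polynomial.degree_X_pow]
    exact_mod_cast Nat.lt_succ_of_le hm
  simp only [coeff, LinearMap.comp_apply, AlgHom.toLinearMap_apply, RingHom.toIntAlgHom_apply,
    LinearMap.restrictScalars_apply, toModel_x₁_pow_mul_x₂_pow, AdjoinRoot.modByMonicHom_mk,
    (Polynomial.modByMonic_eq_self_iff modelPoly_monic).2 hdeg, Polynomial.lcoeff_apply,
    Polynomial.coeff_C_mul_X_pow]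
  by_cases hi : i = l
  · rw [if_pos hi, ← AdjoinRoot.mk_X, ← map_pow, AdjoinRoot.modByMonicHom_mk,
      (Polynomial.modByMonic_eq_self_iff (Polynomial.monic_X_pow (n + 1))).2 hdegA,
      Polynomial.coeff_X_pow]
    simp [hi]
  · simp [hi]

lemma coeff_x₁ (k i : ℕ) (hn : 1 ≤ n) :
    coeff k i (x₁ n a) = if k = 1 ∧ i = 0 then 1 else 0 := by
  simpa using coeff_x₁_pow_mul_x₂_pow (a := a) k i hn zero_le_one

lemma coeff_x₂ (k i : ℕ) : coeff k i (x₂ n a) = if k = 0 ∧ i = 1 then 1 else 0 := by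
  simpa using coeff_x₁_pow_mul_x₂_pow (a := a) k i (Nat.zero_le n) le_rfl

lemma coeff_x₁_pow (k i : ℕ) {m : ℕ} (hm : m ≤ n) :
    coeff k i (x₁ n a ^ m) = if k = m ∧ i = 0 then 1 else 0 := by
  simpa using coeff_x₁_pow_mul_x₂_pow (a := a) k i hm zero_le_one

lemma coeff_x₁_pow_mul_x₂ (k i : ℕ) {m : ℕ} (hm : m ≤ n) :
    coeff k i (x₁ n a ^ m * x₂ n a) = if k = m ∧ i = 1 then 1 else 0 := by
  simpa using coeff_x₁_pow_mul_x₂_pow (a := a) k i hm le_rfl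

lemma smul_add_smul_pow_succ (α β : ℤ) (m : ℕ) :
    a • (α • x₁ n a + β • x₂ n a) ^ (m + 1) =
      (a * α ^ (m + 1)) • x₁ n a ^ (m + 1) +
        (α ^ (m + 1) - (α - a * β) ^ (m + 1)) • (x₁ n a ^ m * x₂ n a) := by
  simp only [zsmul_eq_mul]
  induction m with
  | zero => push_cast; ring
  | succ m ih =>
    rw [pow_succ _ (m + 1), ← mul_assoc, ih]
    push_cast
    linear_combination
      (β * (α ^ (m + 1) - (α - a * β) ^ (m + 1)) * x₁ n a ^ m : Rq n a) * x₂_mul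

def ActsBy (φ : RingAut (Rq n a)) (g : Matrix (Fin 2) (Fin 2) ℤ) : Prop :=
  φ (x₁ n a) = g 0 0 • x₁ n a + g 0 1 • x₂ n a ∧ φ (x₂ n a) = g 1 0 • x₁ n a + g 1 1 • x₂ n a

namespace ActsBy

variable {φ ψ : RingAut (Rq n a)} {g g' : Matrix (Fin 2) (Fin 2) ℤ}

lemma entry_zero_one_eq_zero (heven : Even n) (ha : a ≠ 0) (h : ActsBy φ g) : g 0 1 = 0 := by
  have hpow : a • (g 0 0 • x₁ n a + g 0 1 • x₂ n a) ^ (n + 1) = 0 := by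
    rw [← h.1, ← map_pow, x₁_pow_succ, map_zero, smul_zero]
  rw [smul_add_smul_pow_succ, x₁_pow_succ, smul_zero, zero_add] at hpow
  have hcoeff := congrArg (coeff n 1) hpow
  simp only [map_zsmul, coeff_x₁_pow_mul_x₂ n 1 le_rfl, map_zero] at hcoeff
  have := heven.add_one.pow_inj.1 (sub_eq_zero.1 (by simpa using hcoeff))
  exact (mul_eq_zero.1 (by linarith : a * g 0 1 = 0)).resolve_left ha

lemma entry_zero_zero_eq_one_or_neg_one (hn : 1 ≤ n) (h : ActsBy φ g) (h01 : g 0 1 = 0) :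
    g 0 0 = 1 ∨ g 0 0 = -1 := by
  have hx : g 0 0 • φ.symm (x₁ n a) = x₁ n a := by
    apply φ.injective
    rw [map_zsmul, φ.apply_symm_apply, h.1, h01, zero_smul, add_zero]
  have hcoeff := congrArg (coeff 1 0) hx
  simp only [map_zsmul, coeff_x₁ 1 0 hn, and_self, if_true, smul_eq_mul] at hcoeff
  exact Int.eq_one_or_neg_one_of_mul_eq_one hcoeff

lemma entry_one_one_eq_one_or_neg_one (hn : 1 ≤ n) (h : ActsBy φ g) (h01 : g 0 1 = 0)
    (h00 : g 0 0 = 1 ∨ g 0 0 = -1) : g 1 1 = 1 ∨ g 1 1 = -1 := by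
  have hsymm : φ.symm (x₁ n a) = g 0 0 • x₁ n a := by
    apply φ.injective
    rw [map_zsmul, φ.apply_symm_apply, h.1, h01, zero_smul, add_zero, smul_smul]
    rcases h00 with h00 | h00 <;> simp [h00]
  have hx : g 1 1 • φ.symm (x₂ n a) + (g 1 0 * g 0 0) • x₁ n a = x₂ n a := by
    conv_rhs => rw [← φ.symm_apply_apply (x₂ n a), h.2]
    rw [map_add, map_zsmul, map_zsmul, hsymm, smul_smul, add_comm]
  have hcoeff := congrArg (coeff 0 1) hx
  simp only [map_add, map_zsmul, coeff_x₁ 0 1 hn, coeff_x₂ 0 1, smul_eq_mul] at hcoeff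
  exact Int.eq_one_or_neg_one_of_mul_eq_one (by simpa using hcoeff)

lemma entry_one_one_mul_eq_zero (hn : 2 ≤ n) (h : ActsBy φ g) (h01 : g 0 1 = 0) :
    g 1 1 * (a * g 0 0 + 2 * g 1 0 - a * g 1 1) = 0 := by
  have hrel : (g 1 0 * (a * g 0 0 + g 1 0)) • x₁ n a ^ 2 +
      (g 1 1 * (a * g 0 0 + 2 * g 1 0 - a * g 1 1)) • (x₁ n a ^ 1 * x₂ n a) = 0 := by
    have := congrArg φ x₂_mul
    rw [map_mul, map_add, map_mul, map_intCast, h.1, h.2, h01, map_zero] at this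
    simp only [zsmul_eq_mul] at this ⊢
    push_cast
    linear_combination this - (g 1 1 : Rq n a) ^ 2 * x₂_mul
  have hcoeff := congrArg (coeff 1 1) hrel
  simp only [map_add, map_zsmul, coeff_x₁_pow 1 1 hn, coeff_x₁_pow_mul_x₂ 1 1 (by omega : 1 ≤ n),
    smul_eq_mul, map_zero] at hcoeff
  simpa using hcoeff

lemma matrix_cases (hn : 2 ≤ n) (heven : Even n) (ha : a ≠ 0) (h : ActsBy φ g) :
    g = 1 ∨ g = -1 ∨ g = !![1, 0; -a, -1] ∨ g = !![-1, 0; a, 1] := by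
  have h01 := h.entry_zero_one_eq_zero heven ha
  have h00 := h.entry_zero_zero_eq_one_or_neg_one (by omega) h01
  have h11 := h.entry_one_one_eq_one_or_neg_one (by omega) h01 h00
  have hrel := h.entry_one_one_mul_eq_zero hn h01
  rw [Matrix.eta_fin_two g, h01, Matrix.one_fin_two]
  rcases h00 with h00 | h00 <;> rcases h11 with h11 | h11 <;> rw [h00, h11] at hrel ⊢
  · simp [show g 1 0 = 0 by linarith]
  · simp [show g 1 0 = -a by linarith]
  · simp [show g 1 0 = a by linarith]
  · simp [show g 1 0 = 0 by linarith]

lemma ext (h : ActsBy φ g) (h' : ActsBy ψ g) : φ = ψ :=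
  ringAut_ext (h.1.trans h'.1.symm) (h.2.trans h'.2.symm)

lemma unique (hn : 1 ≤ n) (h : ActsBy φ g) (h' : ActsBy φ g') : g = g' := by
  have hg : ∀ {g}, ActsBy φ g → g = !![coeff 1 0 (φ (x₁ n a)), coeff 0 1 (φ (x₁ n a));
      coeff 1 0 (φ (x₂ n a)), coeff 0 1 (φ (x₂ n a))] := fun h => by
    rw [h.1, h.2]
    simp only [map_add, map_zsmul, coeff_x₁ _ _ hn, coeff_x₂, smul_eq_mul]
    simpa using Matrix.eta_fin_two _
  rw [hg h, hg h']

lemma ne (hn : 1 ≤ n) (h : ActsBy φ g) (h' : ActsBy ψ g') (hg : g ≠ g') : φ ≠ ψ :=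
  fun e => hg (h.unique hn (e ▸ h'))

end ActsBy

lemma isGraded_iff_exists_actsBy {φ : RingAut (Rq n a)} :
    IsGraded n a φ ↔ ∃ g, ActsBy φ g := by
  simp only [IsGraded, Submodule.mem_span_pair]
  constructor
  · rintro ⟨⟨α, β, h₁⟩, γ, δ, h₂⟩
    exact ⟨!![α, β; γ, δ], by simpa using h₁.symm, by simpa using h₂.symm⟩
  · rintro ⟨g, h₁, h₂⟩
    exact ⟨⟨_, _, h₁.symm⟩, _, _, h₂.symm⟩

noncomputable def autOfInvolutive (u v : Rq n a) (hu : u ^ (n + 1) = 0)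
    (hv : v * (a * u + v) = 0) (hu' : lift u v hu hv u = x₁ n a)
    (hv' : lift u v hu hv v = x₂ n a) : RingAut (Rq n a) :=
  have hinv : (lift u v hu hv).comp (lift u v hu hv) = RingHom.id _ :=
    ringHom_ext (by simpa using hu') (by simpa using hv')
  RingEquiv.ofRingHom (lift u v hu hv) (lift u v hu hv) hinv hinv

@[simp]
lemma autOfInvolutive_apply (u v : Rq n a) (hu hv hu' hv') (r : Rq n a) :
    autOfInvolutive u v hu hv hu' hv' r = lift u v hu hv r := rfl

noncomputable def negAut : RingAut (Rq n a) :=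
  autOfInvolutive (-x₁ n a) (-x₂ n a)
    (by simp only [neg_pow (x₁ n a), x₁_pow_succ, mul_zero])
    (by linear_combination x₂_mul)
    (by simp) (by simp)

noncomputable def reflAut : RingAut (Rq n a) :=
  autOfInvolutive (x₁ n a) (-(a * x₁ n a) - x₂ n a) x₁_pow_succ
    (by linear_combination x₂_mul)
    (by simp) (by simp)

lemma actsBy_one : ActsBy (1 : RingAut (Rq n a)) 1 := by
  simp [ActsBy]

lemma actsBy_negAut : ActsBy (negAut (n := n) (a := a)) (-1) := by
  simp [ActsBy, negAut]

lemma actsBy_reflAut : ActsBy (reflAut (n := n) (a := a)) !![1, 0; -a, -1] := by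
  simp [ActsBy, reflAut, zsmul_eq_mul]
  ring

lemma actsBy_negAut_mul_reflAut :
    ActsBy (negAut * reflAut : RingAut (Rq n a)) !![-1, 0; a, 1] := by
  simp [ActsBy, negAut, reflAut, zsmul_eq_mul]
  ring

lemma isGraded_iff_mem (hn : 2 ≤ n) (heven : Even n) (ha : a ≠ 0) {φ : RingAut (Rq n a)} :
    IsGraded n a φ ↔ φ ∈ ({1, negAut, reflAut, negAut * reflAut} : Set (RingAut (Rq n a))) := by
  rw [isGraded_iff_exists_actsBy]
  constructor
  · rintro ⟨g, h⟩
    rcases h.matrix_cases hn heven ha with rfl | rfl | rfl | rfl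
    exacts [.inl (h.ext actsBy_one), .inr (.inl (h.ext actsBy_negAut)),
      .inr (.inr (.inl (h.ext actsBy_reflAut))),
      .inr (.inr (.inr (h.ext actsBy_negAut_mul_reflAut)))]
  · rintro (rfl | rfl | rfl | rfl)
    exacts [⟨_, actsBy_one⟩, ⟨_, actsBy_negAut⟩, ⟨_, actsBy_reflAut⟩,
      ⟨_, actsBy_negAut_mul_reflAut⟩]

lemma negAut_sq : (negAut ^ 2 : RingAut (Rq n a)) = 1 :=
  ringAut_ext (by simp [sq, negAut]) (by simp [sq, negAut])

lemma reflAut_sq : (reflAut ^ 2 : RingAut (Rq n a)) = 1 :=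
  ringAut_ext (by simp [sq, reflAut]) (by simp [sq, reflAut])

lemma commute_negAut_reflAut : Commute (negAut : RingAut (Rq n a)) reflAut :=
  ringAut_ext (by simp [negAut, reflAut]) (by simp [negAut, reflAut]; ring)

noncomputable def kleinHom : Multiplicative (ZMod 2 × ZMod 2) →* RingAut (Rq n a) :=
  (MonoidHom.noncommCoprod (involutionHom negAut negAut_sq) (involutionHom reflAut reflAut_sq)
    fun _ _ => commute_negAut_reflAut.pow_pow _ _).comp
      (MulEquiv.prodMultiplicative (ZMod 2) (ZMod 2)).toMonoidHom

lemma kleinHom_ofAdd (i j : ZMod 2) :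
    kleinHom (.ofAdd (i, j)) = (negAut ^ i.val * reflAut ^ j.val : RingAut (Rq n a)) :=
  rfl

lemma range_kleinHom :
    Set.range (kleinHom (n := n) (a := a)) = {1, negAut, reflAut, negAut * reflAut} := by
  ext φ
  constructor
  · rintro ⟨p, rfl⟩
    rcases multiplicative_zmod_two_prod_cases p with rfl | rfl | rfl | rfl <;>
      simp [kleinHom_ofAdd, ZMod.val_one_eq_one_mod]
  · rintro (rfl | rfl | rfl | rfl)
    exacts [⟨.ofAdd (0, 0), by simp [kleinHom_ofAdd]⟩,
      ⟨.ofAdd (1, 0), by simp [kleinHom_ofAdd, ZMod.val_one_eq_one_mod]⟩,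
      ⟨.ofAdd (0, 1), by simp [kleinHom_ofAdd, ZMod.val_one_eq_one_mod]⟩,
      ⟨.ofAdd (1, 1), by simp [kleinHom_ofAdd, ZMod.val_one_eq_one_mod]⟩]

lemma kleinHom_injective (hn : 1 ≤ n) : Function.Injective (kleinHom (n := n) (a := a)) := by
  rw [injective_iff_map_eq_one]
  intro p hp
  rcases multiplicative_zmod_two_prod_cases p with rfl | rfl | rfl | rfl <;>
    simp only [kleinHom_ofAdd, ZMod.val_one_eq_one_mod, ZMod.val_zero, Nat.one_mod, pow_zero,
      pow_one, mul_one, one_mul] at hp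
  · rfl
  · exact absurd hp <|
      actsBy_negAut.ne hn actsBy_one (by simp [← Matrix.ext_iff, Fin.forall_fin_two])
  · exact absurd hp <|
      actsBy_reflAut.ne hn actsBy_one (by simp [← Matrix.ext_iff, Fin.forall_fin_two])
  · exact absurd hp <|
      actsBy_negAut_mul_reflAut.ne hn actsBy_one (by simp [← Matrix.ext_iff, Fin.forall_fin_two])

end Rq

open Rq

/-- For `n ≥ 2` even and `a ∈ {1,2}`, the graded ring automorphisms of
`R = ℤ[x₁,x₂]/⟨x₁^{n+1}, x₂(a·x₁+x₂)⟩`, identified with integer 2×2 matrices acting on the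
degree-2 part, are exactly the four matrices `I, -I, (1,0;-a,-1), (-1,0;a,1)`; moreover the
group of graded automorphisms is isomorphic to `ℤ/2 × ℤ/2`. -/
theorem stmt1 (n : ℕ) (a : ℤ) (hn : 2 ≤ n) (heven : Even n) (ha : a = 1 ∨ a = 2) :
    (∀ (φ : RingAut (Rq n a)) (g : Matrix (Fin 2) (Fin 2) ℤ),
        φ (x₁ n a) = g 0 0 • x₁ n a + g 0 1 • x₂ n a →
        φ (x₂ n a) = g 1 0 • x₁ n a + g 1 1 • x₂ n a →
        g ∈ ({1, -1, !![1, 0; -a, -1], !![-1, 0; a, 1]} :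
          Set (Matrix (Fin 2) (Fin 2) ℤ))) ∧
    (∀ g ∈ ({1, -1, !![1, 0; -a, -1], !![-1, 0; a, 1]} :
          Set (Matrix (Fin 2) (Fin 2) ℤ)),
        ∃ φ : RingAut (Rq n a),
          φ (x₁ n a) = g 0 0 • x₁ n a + g 0 1 • x₂ n a ∧
          φ (x₂ n a) = g 1 0 • x₁ n a + g 1 1 • x₂ n a) ∧
    (∃ e : Multiplicative (ZMod 2 × ZMod 2) →* RingAut (Rq n a),
        Function.Injective e ∧
        ∀ φ : RingAut (Rq n a), φ ∈ Set.range e ↔ IsGraded n a φ) := by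
  have ha₀ : a ≠ 0 := by rcases ha with rfl | rfl <;> norm_num
  refine ⟨fun φ g h₁ h₂ => ActsBy.matrix_cases hn heven ha₀ ⟨h₁, h₂⟩, ?_,
    kleinHom, kleinHom_injective (by omega), fun φ => ?_⟩
  · rintro g (rfl | rfl | rfl | rfl)
    exacts [⟨_, actsBy_one⟩, ⟨_, actsBy_negAut⟩, ⟨_, actsBy_reflAut⟩,
      ⟨_, actsBy_negAut_mul_reflAut⟩]
  · rw [range_kleinHom, isGraded_iff_mem hn heven ha₀]
end

section
/- For R = ℤ[x₁,x₂]/⟨x₁^{n+1}, x₂(a x₁ + x₂)⟩ with x₁, x₂ of degree 2, n ≥ 2 and a ≥ 1, every graded ring automorphism of R permutes the set {±x₂, ±(a·x₁ + x₂)} of degree-2 elements. -/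
open MvPolynomial

namespace Stmt9Aux

abbrev P2 : Type := MvPolynomial (Fin 2) ℤ

noncomputable def s01 : Fin 2 →₀ ℕ := Finsupp.single 0 1
noncomputable def s11 : Fin 2 →₀ ℕ := Finsupp.single 1 1
noncomputable def s02 : Fin 2 →₀ ℕ := Finsupp.single 0 2
noncomputable def s12 : Fin 2 →₀ ℕ := Finsupp.single 1 2

/-! ### Coefficient functionals vanish on the ideal -/

lemma gdef (a : ℤ) : (X 1 * (C a * X 0 + X 1) : P2)
    = monomial (s01 + s11) a + monomial s12 1 := by
  have h0 : (X 0 : P2) = monomial s01 1 := rfl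
  have h1 : (X 1 : P2) = monomial s11 1 := rfl
  rw [h0, h1, mul_add, C_mul_monomial, monomial_mul, monomial_mul, mul_one, one_mul,
    add_comm s11 s01]
  congr 1
  rw [s11, s12, ← Finsupp.single_add]
  norm_num

lemma coeff_mul_g (a : ℤ) (q : P2) (m : Fin 2 →₀ ℕ) :
    coeff m (q * (X 1 * (C a * X 0 + X 1)))
      = (if s01 + s11 ≤ m then coeff (m - (s01 + s11)) q * a else 0)
        + (if s12 ≤ m then coeff (m - s12) q else 0) := by
  rw [gdef, mul_add, coeff_add, coeff_mul_monomial', coeff_mul_monomial']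
  simp

lemma coeff_mul_xpow (n : ℕ) (hn : 2 ≤ n) (q : P2) (m : Fin 2 →₀ ℕ) (hm : m 0 ≤ 2) :
    coeff m (q * (X 0 : P2) ^ (n + 1)) = 0 := by
  rw [X_pow_eq_monomial, coeff_mul_monomial']
  rw [if_neg]
  intro h
  have := h 0
  simp [Finsupp.single_apply] at this
  omega

lemma key (n : ℕ) (hn : 2 ≤ n) (a : ℤ) (p : P2)
    (hp : p ∈ Ideal.span {(X 0 : P2) ^ (n + 1), X 1 * (C a * X 0 + X 1)}) :
    coeff s01 p = 0 ∧ coeff s11 p = 0 ∧ coeff s02 p = 0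
      ∧ coeff (s01 + s11) p = a * coeff s12 p := by
  obtain ⟨q1, q2, rfl⟩ := Ideal.mem_span_pair.mp hp
  have e1 : ∀ m : Fin 2 →₀ ℕ, m 0 ≤ 2 → coeff m (q1 * (X 0 : P2) ^ (n+1)) = 0 :=
    fun m hm => coeff_mul_xpow n hn q1 m hm
  have hs01 : (s01 : Fin 2 →₀ ℕ) 0 ≤ 2 := by simp [s01]
  have hs11 : (s11 : Fin 2 →₀ ℕ) 0 ≤ 2 := by simp [s11, Finsupp.single_apply]
  have hs02 : (s02 : Fin 2 →₀ ℕ) 0 ≤ 2 := by simp [s02]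
  have ht1 : ((s01 + s11 : Fin 2 →₀ ℕ)) 0 ≤ 2 := by simp [s01, s11, Finsupp.single_apply]
  have hs12 : (s12 : Fin 2 →₀ ℕ) 0 ≤ 2 := by simp [s12, Finsupp.single_apply]
  refine ⟨?_, ?_, ?_, ?_⟩
  · rw [coeff_add, e1 _ hs01, coeff_mul_g, if_neg, if_neg]
    · ring
    · intro h; have := h 1; simp [s01, s12, Finsupp.single_apply] at this
    · intro h; have := h 1; simp [s01, s11, Finsupp.single_apply] at this
  · rw [coeff_add, e1 _ hs11, coeff_mul_g, if_neg, if_neg]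
    · ring
    · intro h; have := h 1; simp [s11, s12, Finsupp.single_apply] at this
    · intro h; have := h 0; simp [s01, s11, Finsupp.single_apply] at this
  · rw [coeff_add, e1 _ hs02, coeff_mul_g, if_neg, if_neg]
    · ring
    · intro h; have := h 1; simp [s02, s12, Finsupp.single_apply] at this
    · intro h; have := h 1; simp [s02, s01, s11, Finsupp.single_apply] at this
  · rw [coeff_add, coeff_add, e1 _ ht1, e1 _ hs12,
      coeff_mul_g, coeff_mul_g, if_pos le_rfl, if_pos le_rfl, if_neg, if_neg]
    · simp; ring
    · intro h; have := h 0; simp [s01, s11, s12, Finsupp.single_apply] at this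
    · intro h; have := h 1; simp [s01, s11, s12, Finsupp.single_apply] at this

/-! ### Coefficients of a linear substitution -/

lemma c1 (q : P2) : coeff s01 (q * X 0) = coeff 0 q := by
  rw [coeff_mul_X', if_pos]
  · congr 1; rw [s01]; simp
  · rw [s01]; simp

lemma c2 (q : P2) : coeff s01 (q * X 1) = 0 := by
  rw [coeff_mul_X', if_neg]
  rw [s01]; simp

lemma c3 (q : P2) : coeff s11 (q * X 0) = 0 := by
  rw [coeff_mul_X', if_neg]
  rw [s11]; simp

lemma c4 (q : P2) : coeff s11 (q * X 1) = coeff 0 q := by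
  rw [coeff_mul_X', if_pos]
  · congr 1; rw [s11]; simp
  · rw [s11]; simp

lemma c5 (q : P2) (i : Fin 2) : coeff 0 (q * X i) = 0 := by
  rw [coeff_mul_X', if_neg]
  simp

noncomputable def sub (α β γ δ : ℤ) : Fin 2 → P2 :=
  ![C α * X 0 + C β * X 1, C γ * X 0 + C δ * X 1]

lemma subst_coeffs (α β γ δ : ℤ) (p : P2) :
    coeff s01 (eval₂ C (sub α β γ δ) p) = α * coeff s01 p + γ * coeff s11 p
    ∧ coeff s11 (eval₂ C (sub α β γ δ) p) = β * coeff s01 p + δ * coeff s11 p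
    ∧ coeff 0 (eval₂ C (sub α β γ δ) p) = coeff 0 p := by
  induction p using MvPolynomial.induction_on with
  | C r =>
    rw [eval₂_C]
    have h1 : coeff s01 (C r : P2) = 0 := by
      rw [coeff_C, if_neg]; rw [s01]; intro h
      have h' := DFunLike.congr_fun h 0; simp [Finsupp.single_apply] at h'
    have h2 : coeff s11 (C r : P2) = 0 := by
      rw [coeff_C, if_neg]; rw [s11]; intro h
      have h' := DFunLike.congr_fun h 1; simp [Finsupp.single_apply] at h'
    exact ⟨by rw [h1, h2]; ring, by rw [h1, h2]; ring, rfl⟩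
  | add p q hp hq =>
    simp only [eval₂_add, coeff_add]
    obtain ⟨hp1, hp2, hp3⟩ := hp
    obtain ⟨hq1, hq2, hq3⟩ := hq
    refine ⟨by rw [hp1, hq1]; ring, by rw [hp2, hq2]; ring, by rw [hp3, hq3]⟩
  | mul_X p i hp =>
    obtain ⟨hp1, hp2, hp3⟩ := hp
    simp only [sub] at hp1 hp2 hp3
    rw [eval₂_mul, eval₂_X]
    fin_cases i
    · simp only [Fin.zero_eta, Fin.mk_one, sub, Matrix.cons_val_zero]
      rw [mul_add, mul_left_comm, mul_left_comm _ (C β)]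
      simp only [coeff_add, coeff_C_mul, c1, c2, c3, c4, c5, hp3]
      refine ⟨by ring, by ring, by simp⟩
    · simp only [Fin.zero_eta, Fin.mk_one, sub, Matrix.cons_val_one, Matrix.head_cons, Matrix.cons_val_zero]
      rw [mul_add, mul_left_comm, mul_left_comm _ (C δ)]
      simp only [coeff_add, coeff_C_mul, c1, c2, c3, c4, c5, hp3]
      refine ⟨by ring, by ring, by simp⟩

/-! ### Coefficients of a product of two linear forms -/

lemma ne1 : s01 + s11 ≠ s02 := by
  intro h; have := DFunLike.congr_fun h 1; simp [s01, s11, s02, Finsupp.single_apply] at this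
lemma ne2 : s12 ≠ s02 := by
  intro h; have := DFunLike.congr_fun h 0; simp [s12, s02, Finsupp.single_apply] at this
lemma ne3 : s02 ≠ s01 + s11 := fun h => ne1 h.symm
lemma ne4 : s12 ≠ s01 + s11 := by
  intro h; have := DFunLike.congr_fun h 1; simp [s12, s01, s11, Finsupp.single_apply] at this
lemma ne5 : s02 ≠ s12 := fun h => ne2 h.symm
lemma ne6 : s01 + s11 ≠ s12 := fun h => ne4 h.symm

lemma prod_expand (γ δ c d : ℤ) :
    (C γ * X 0 + C δ * X 1) * (C c * X 0 + C d * X 1)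
      = monomial s02 (γ * c) + monomial (s01 + s11) (γ * d + δ * c) + monomial s12 (δ * d) := by
  have h0 : (X 0 : P2) = monomial s01 1 := rfl
  have h1 : (X 1 : P2) = monomial s11 1 := rfl
  have e02 : s02 = s01 + s01 := by rw [s01, s02, ← Finsupp.single_add]
  have e12 : s12 = s11 + s11 := by rw [s11, s12, ← Finsupp.single_add]
  rw [h0, h1, C_mul_monomial, C_mul_monomial, C_mul_monomial, C_mul_monomial,
    add_mul, mul_add, mul_add, monomial_mul, monomial_mul, monomial_mul, monomial_mul,
    e02, e12, add_comm s11 s01]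
  simp only [mul_one, one_mul]
  rw [map_add]
  abel

lemma prod_coeffs (γ δ c d : ℤ) :
    coeff s02 ((C γ * X 0 + C δ * X 1) * (C c * X 0 + C d * X 1) : P2) = γ * c
    ∧ coeff (s01 + s11) ((C γ * X 0 + C δ * X 1) * (C c * X 0 + C d * X 1) : P2) = γ * d + δ * c
    ∧ coeff s12 ((C γ * X 0 + C δ * X 1) * (C c * X 0 + C d * X 1) : P2) = δ * d := by
  rw [prod_expand]
  refine ⟨?_, ?_, ?_⟩ <;>
    simp [coeff_add, coeff_monomial, ne1, ne2, ne3, ne4, ne5, ne6]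

/-! ### Quotient glue -/

noncomputable def J (n : ℕ) (a : ℤ) : Ideal P2 :=
  Ideal.span ({(X 0 : P2) ^ (n + 1), X 1 * (C a * X 0 + X 1)} : Set P2)

lemma mk_lin (n : ℕ) (a α β : ℤ) :
    Ideal.Quotient.mk (J n a) (C α * X 0 + C β * X 1) = α • x₁ n a + β • x₂ n a := by
  rw [← smul_eq_C_mul, ← smul_eq_C_mul, map_add, map_zsmul, map_zsmul]
  rfl

lemma coeff_X0 : coeff s01 (X 0 : P2) = 1 := by
  rw [show (X 0 : P2) = monomial s01 1 from rfl, coeff_monomial, if_pos rfl]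

lemma coeff_X0' : coeff s11 (X 0 : P2) = 0 := by
  rw [show (X 0 : P2) = monomial s01 1 from rfl, coeff_monomial, if_neg]
  intro h; have := DFunLike.congr_fun h 0; simp [s01, s11, Finsupp.single_apply] at this

lemma coeff_X1 : coeff s01 (X 1 : P2) = 0 := by
  rw [show (X 1 : P2) = monomial s11 1 from rfl, coeff_monomial, if_neg]
  intro h; have := DFunLike.congr_fun h 0; simp [s01, s11, Finsupp.single_apply] at this

lemma coeff_X1' : coeff s11 (X 1 : P2) = 1 := by
  rw [show (X 1 : P2) = monomial s11 1 from rfl, coeff_monomial, if_pos rfl]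

end Stmt9Aux

open Stmt9Aux in
set_option maxHeartbeats 1000000 in
/-- For `n ≥ 2` and `a ≥ 1`, every graded ring automorphism of
`R = ℤ[x₁,x₂]/⟨x₁^{n+1}, x₂(a·x₁+x₂)⟩` (i.e. every ring automorphism preserving the degree-2
part `ℤx₁ ⊕ ℤx₂`) permutes the set `{x₂, -x₂, a·x₁+x₂, -(a·x₁+x₂)}` of degree-2 elements. -/
theorem stmt9 (n : ℕ) (a : ℤ) (hn : 2 ≤ n) (ha : 1 ≤ a)
    (φ : RingAut (Rq n a))
    (hg1 : φ (x₁ n a) ∈ Submodule.span ℤ ({x₁ n a, x₂ n a} : Set (Rq n a)))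
    (hg2 : φ (x₂ n a) ∈ Submodule.span ℤ ({x₁ n a, x₂ n a} : Set (Rq n a))) :
    (⇑φ) '' ({x₂ n a, -x₂ n a, a • x₁ n a + x₂ n a, -(a • x₁ n a + x₂ n a)} : Set (Rq n a)) =
      ({x₂ n a, -x₂ n a, a • x₁ n a + x₂ n a, -(a • x₁ n a + x₂ n a)} : Set (Rq n a)) := by
  obtain ⟨α, β, hαβ⟩ := Submodule.mem_span_pair.mp hg1
  obtain ⟨γ, δ, hγδ⟩ := Submodule.mem_span_pair.mp hg2
  set w := x₂ n a with hw
  set z := a • x₁ n a + x₂ n a with hz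
  -- the ring hom equation φ ∘ mk = mk ∘ σ
  have hcomp : (φ.toRingHom).comp (Ideal.Quotient.mk (J n a))
      = (Ideal.Quotient.mk (J n a)).comp (eval₂Hom C (sub α β γ δ)) := by
    apply MvPolynomial.ringHom_ext
    · intro r
      show φ (Ideal.Quotient.mk (J n a) (C r)) = Ideal.Quotient.mk (J n a) (eval₂ C (sub α β γ δ) (C r))
      rw [eval₂_C]
      rw [show (C r : P2) = (r : P2) from by exact_mod_cast (eq_intCast C r), map_intCast]
      exact map_intCast φ r
    · intro i
      fin_cases i
      · show φ (x₁ n a) = Ideal.Quotient.mk (J n a) (eval₂ C (sub α β γ δ) (X 0))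
        rw [eval₂_X, show sub α β γ δ 0 = C α * X 0 + C β * X 1 from rfl, mk_lin]
        exact hαβ.symm
      · show φ (x₂ n a) = Ideal.Quotient.mk (J n a) (eval₂ C (sub α β γ δ) (X 1))
        rw [eval₂_X, show sub α β γ δ 1 = C γ * X 0 + C δ * X 1 from rfl, mk_lin]
        exact hγδ.symm
  have happ : ∀ p : P2, φ (Ideal.Quotient.mk (J n a) p)
      = Ideal.Quotient.mk (J n a) (eval₂ C (sub α β γ δ) p) := by
    intro p
    have := RingHom.congr_fun hcomp p
    exact this
  -- surjectivity gives a right inverse of the coefficient matrix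
  obtain ⟨r1, hr1⟩ := φ.surjective (x₁ n a)
  obtain ⟨p1, rfl⟩ := Ideal.Quotient.mk_surjective r1
  obtain ⟨r2, hr2⟩ := φ.surjective (x₂ n a)
  obtain ⟨p2, rfl⟩ := Ideal.Quotient.mk_surjective r2
  have hr1' : φ (Ideal.Quotient.mk (J n a) p1) = x₁ n a := hr1
  have hr2' : φ (Ideal.Quotient.mk (J n a) p2) = x₂ n a := hr2
  rw [happ] at hr1' hr2'
  have hm1 : eval₂ C (sub α β γ δ) p1 - X 0 ∈ J n a := by
    rw [← Ideal.Quotient.eq]; exact hr1'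
  have hm2 : eval₂ C (sub α β γ δ) p2 - X 1 ∈ J n a := by
    rw [← Ideal.Quotient.eq]; exact hr2'
  obtain ⟨k1, k2, -, -⟩ := key n hn a _ hm1
  obtain ⟨l1, l2, -, -⟩ := key n hn a _ hm2
  rw [coeff_sub, coeff_X0] at k1
  rw [coeff_sub, coeff_X0'] at k2
  rw [coeff_sub, coeff_X1] at l1
  rw [coeff_sub, coeff_X1'] at l2
  obtain ⟨σ1, σ2, -⟩ := subst_coeffs α β γ δ p1
  obtain ⟨τ1, τ2, -⟩ := subst_coeffs α β γ δ p2
  set A1 := coeff s01 p1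
  set A2 := coeff s11 p1
  set B1 := coeff s01 p2
  set B2 := coeff s11 p2
  have q1 : α * A1 + γ * A2 = 1 := by rw [← σ1]; omega
  have q2 : β * A1 + δ * A2 = 0 := by rw [← σ2]; omega
  have q3 : α * B1 + γ * B2 = 0 := by rw [← τ1]; omega
  have q4 : β * B1 + δ * B2 = 1 := by rw [← τ2]; omega
  have hdet : (α * δ - β * γ) * (A1 * B2 - A2 * B1) = 1 := by
    linear_combination (β * B1 + δ * B2) * q1 - (β * A1 + δ * A2) * q3 + q4
  -- the defining relation, transported by φ
  have hrel : Ideal.Quotient.mk (J n a) (X 1 * (C a * X 0 + X 1)) = 0 := by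
    rw [Ideal.Quotient.eq_zero_iff_mem]
    exact Ideal.subset_span (by simp)
  have hz' : z = Ideal.Quotient.mk (J n a) (C a * X 0 + X 1) := by
    rw [show (C a * X 0 + X 1 : P2) = C a * X 0 + C 1 * X 1 by rw [map_one, one_mul],
      mk_lin, one_smul]
  have hx2rel : w * z = 0 := by
    rw [show w = Ideal.Quotient.mk (J n a) (X 1) from rfl, hz',
]
    exact (map_mul (Ideal.Quotient.mk (J n a)) (X 1) (C a * X 0 + X 1)).symm.trans hrel
  have hprod : Ideal.Quotient.mk (J n a)
      ((C γ * X 0 + C δ * X 1) * (C (a * α + γ) * X 0 + C (a * β + δ) * X 1)) = 0 := by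
    rw [map_mul, mk_lin, mk_lin]
    have e1 : (γ : ℤ) • x₁ n a + δ • x₂ n a = φ w := hγδ
    have e2 : (a * α + γ : ℤ) • x₁ n a + (a * β + δ : ℤ) • x₂ n a = φ z := by
      rw [hz, map_add, map_zsmul, ← hαβ, ← hγδ]
      module
    rw [e1, e2]
    exact (map_mul φ w z).symm.trans ((congrArg φ hx2rel).trans (map_zero φ))
  have hprodmem := Ideal.Quotient.eq_zero_iff_mem.mp hprod
  obtain ⟨-, -, P3, P4⟩ := key n hn a _ hprodmem
  obtain ⟨C1, C2, C3⟩ := prod_coeffs γ δ (a * α + γ) (a * β + δ)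
  rw [C1] at P3
  rw [C2, C3] at P4
  -- now pure integer arithmetic
  have ha0 : (a : ℤ) ≠ 0 := by omega
  have himg : (⇑φ) '' ({w, -w, z, -z} : Set (Rq n a)) = {φ w, -(φ w), φ z, -(φ z)} := by
    rw [Set.image_insert_eq, Set.image_insert_eq, Set.image_insert_eq, Set.image_singleton,
      map_neg, map_neg]
  rw [himg]
  have hφw : φ w = γ • x₁ n a + δ • x₂ n a := hγδ.symm
  have hφz : φ z = (a * α + γ : ℤ) • x₁ n a + (a * β + δ : ℤ) • x₂ n a := by
    rw [hz, map_add, map_zsmul, ← hαβ, ← hγδ]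
    module
  rcases mul_eq_zero.mp P3 with hγ0 | hc0
  · -- γ = 0 : φ w = ± w, φ z = ± z
    subst hγ0
    have hδu : δ = 1 ∨ δ = -1 :=
      Int.isUnit_iff.mp (IsUnit.of_mul_eq_one (a := δ) (α * (A1 * B2 - A2 * B1))
        (by linear_combination hdet))
    have hαu : α = 1 ∨ α = -1 :=
      Int.isUnit_iff.mp (IsUnit.of_mul_eq_one (a := α) (δ * (A1 * B2 - A2 * B1))
        (by linear_combination hdet))
    have hδ0 : δ ≠ 0 := by rcases hδu with h | h <;> omega
    have h5 : a * δ * (α - (a * β + δ)) = 0 := by linear_combination P4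
    have h6 : α = a * β + δ := by
      rcases mul_eq_zero.mp h5 with h | h
      · rcases mul_eq_zero.mp h with h | h
        · omega
        · exact absurd h hδ0
      · omega
    have hφw' : φ w = δ • w := by
      rw [← hγδ, zero_smul, zero_add]
    have hφz' : φ z = α • z := by
      rw [hφz, hz, ← h6]
      module
    rw [hφw', hφz']
    rcases hδu with rfl | rfl <;> rcases hαu with rfl | rfl <;>
      simp only [one_smul, neg_smul, neg_neg] <;>
      · ext t
        simp only [Set.mem_insert_iff, Set.mem_singleton_iff]
        tauto
  · -- a•α + γ = 0 : φ w = ± z, φ z = ± w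
    have hγval : γ = -(a * α) := by omega
    subst hγval
    have hαu : α = 1 ∨ α = -1 :=
      Int.isUnit_iff.mp (IsUnit.of_mul_eq_one (a := α) ((a * β + δ) * (A1 * B2 - A2 * B1))
        (by linear_combination hdet))
    have hdu : a * β + δ = 1 ∨ a * β + δ = -1 :=
      Int.isUnit_iff.mp (IsUnit.of_mul_eq_one (a := (a * β + δ)) (α * (A1 * B2 - A2 * B1))
        (by linear_combination hdet))
    have hd0 : a * β + δ ≠ 0 := by rcases hdu with h | h <;> omega
    have h7 : a * ((a * β + δ) * (δ + α)) = 0 := by linear_combination -P4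
    have h8 : δ = -α := by
      rcases mul_eq_zero.mp h7 with h | h
      · omega
      · rcases mul_eq_zero.mp h with h | h
        · exact absurd h hd0
        · omega
    have hφw' : φ w = (-α) • z := by
      rw [← hγδ, h8, hz]
      module
    have hφz' : φ z = (a * β + δ) • w := by
      rw [hφz, hw]
      module
    rw [hφw', hφz']
    rcases hdu with hd1 | hd1 <;> rw [hd1] <;> rcases hαu with rfl | rfl <;>
      simp only [one_smul, neg_smul, neg_neg, neg_one_smul] <;>
      · ext t
        simp only [Set.mem_insert_iff, Set.mem_singleton_iff]
        tauto
end

section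
/- Let K be the subgroup of the torus T² = (S¹)² acting on S^{2n+1} × S^{2m+1} ⊂ ℂ^{n+1} × ℂ^{m+1} by (t₁,t₂)·((w₁,…,w_{n+1}),(z₁,…,z_{m+1})) = ((t₁t₂^{b₁}w₁,…,t₁t₂^{b_n}w_n, t₁w_{n+1}), (t₁^{a₁}t₂z₁,…,t₁^{a_m}t₂z_m, t₂z_{m+1})). If 1 − a_j b_i = ±1 for all i,j, then this action is free. -/
/-!
A nonzero coordinate of a fixed point turns the fixed-point equation into a relation between
`t₁` and `t₂`: either `t₁ = 1` or `t₁ t₂^{bᵢ} = 1` from the first sphere, and either `t₂ = 1` or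
`t₁^{aⱼ} t₂ = 1` from the second. Eliminating `t₁ = t₂^{-bᵢ}` from the last pair leaves
`t₂^{1 - aⱼbᵢ} = 1`, and the exponent is `±1`.
-/

lemma exists_ne_zero_of_sum_norm_sq_eq_one {ι E : Type*} [Fintype ι] [NormedAddCommGroup E]
    {v : ι → E} (hv : ∑ i, ‖v i‖ ^ 2 = 1) : ∃ i, v i ≠ 0 := by
  obtain ⟨i, -, hi⟩ := Finset.exists_ne_zero_of_sum_ne_zero (hv ▸ one_ne_zero)
  exact ⟨i, fun h ↦ hi (by simp [h])⟩

section GroupWithZero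

variable {G : Type*} [GroupWithZero G] {s t : G} {a b : ℤ}

lemma zpow_one_sub_mul_eq_one (hs : s * t ^ b = 1) (ht : s ^ a * t = 1) :
    t ^ (1 - a * b) = 1 := by
  have hs' : s = t ^ (-b) := by rw [zpow_neg]; exact eq_inv_of_mul_eq_one_left hs
  rw [hs', ← zpow_mul, ← zpow_add_one₀ (right_ne_zero_of_mul_eq_one ht)] at ht
  rw [← ht, mul_comm a, sub_eq_neg_add, neg_mul]

lemma eq_one_and_eq_one_of_mul_zpow_eq_one (hs : s * t ^ b = 1) (ht : s ^ a * t = 1)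
    (hab : 1 - a * b = 1 ∨ 1 - a * b = -1) : s = 1 ∧ t = 1 := by
  have h := zpow_one_sub_mul_eq_one hs ht
  obtain rfl : t = 1 := by rcases hab with hab | hab <;> simpa [hab] using h
  simpa using hs

end GroupWithZero

theorem stmt17_general (n m : ℕ) (a : Fin m → ℤ) (b : Fin n → ℤ)
    (hab : ∀ (i : Fin n) (j : Fin m), 1 - a j * b i = 1 ∨ 1 - a j * b i = -1)
    (t₁ t₂ : ℂ)
    (w : Fin (n + 1) → ℂ) (z : Fin (m + 1) → ℂ)
    (hw : ∑ i, ‖w i‖ ^ 2 = 1) (hz : ∑ j, ‖z j‖ ^ 2 = 1)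
    (hfw : ∀ i : Fin n, t₁ * t₂ ^ (b i) * w i.castSucc = w i.castSucc)
    (hfwlast : t₁ * w (Fin.last n) = w (Fin.last n))
    (hfz : ∀ j : Fin m, t₁ ^ (a j) * t₂ * z j.castSucc = z j.castSucc)
    (hfzlast : t₂ * z (Fin.last m) = z (Fin.last m)) :
    t₁ = 1 ∧ t₂ = 1 := by
  have hw' : t₁ = 1 ∨ ∃ i, t₁ * t₂ ^ b i = 1 := by
    obtain ⟨i, hi⟩ := exists_ne_zero_of_sum_norm_sq_eq_one hw
    rcases Fin.eq_castSucc_or_eq_last i with ⟨i, rfl⟩ | rfl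
    · exact .inr ⟨i, (mul_eq_right₀ hi).mp (hfw i)⟩
    · exact .inl ((mul_eq_right₀ hi).mp hfwlast)
  have hz' : t₂ = 1 ∨ ∃ j, t₁ ^ a j * t₂ = 1 := by
    obtain ⟨j, hj⟩ := exists_ne_zero_of_sum_norm_sq_eq_one hz
    rcases Fin.eq_castSucc_or_eq_last j with ⟨j, rfl⟩ | rfl
    · exact .inr ⟨j, (mul_eq_right₀ hj).mp (hfz j)⟩
    · exact .inl ((mul_eq_right₀ hj).mp hfzlast)
  rcases hw' with rfl | ⟨i, hi⟩ <;> rcases hz' with rfl | ⟨j, hj⟩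
  · exact ⟨rfl, rfl⟩
  · simpa using hj
  · simpa using hi
  · exact eq_one_and_eq_one_of_mul_zpow_eq_one hi hj (hab i j)

/-- The `T²`-action on `S^{2n+1} × S^{2m+1} ⊂ ℂ^{n+1} × ℂ^{m+1}` given by
`(t₁,t₂)·((wᵢ),(zⱼ)) = ((t₁t₂^{bᵢ}wᵢ, t₁w_{n+1}), (t₁^{aⱼ}t₂zⱼ, t₂z_{m+1}))` is free,
provided `1 - aⱼbᵢ = ±1` for all `i, j`:  if a point of `S^{2n+1} × S^{2m+1}` is fixed by
`(t₁,t₂)` with `|t₁| = |t₂| = 1`, then `t₁ = t₂ = 1`. -/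
theorem stmt17 (n m : ℕ) (a : Fin m → ℤ) (b : Fin n → ℤ)
    (hab : ∀ (i : Fin n) (j : Fin m), 1 - a j * b i = 1 ∨ 1 - a j * b i = -1)
    (t₁ t₂ : ℂ) (ht₁ : ‖t₁‖ = 1) (ht₂ : ‖t₂‖ = 1)
    (w : Fin (n + 1) → ℂ) (z : Fin (m + 1) → ℂ)
    (hw : ∑ i, ‖w i‖ ^ 2 = 1) (hz : ∑ j, ‖z j‖ ^ 2 = 1)
    (hfw : ∀ i : Fin n, t₁ * t₂ ^ (b i) * w i.castSucc = w i.castSucc)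
    (hfwlast : t₁ * w (Fin.last n) = w (Fin.last n))
    (hfz : ∀ j : Fin m, t₁ ^ (a j) * t₂ * z j.castSucc = z j.castSucc)
    (hfzlast : t₂ * z (Fin.last m) = z (Fin.last m)) :
    t₁ = 1 ∧ t₂ = 1 :=
  stmt17_general n m a b hab t₁ t₂ w z hw hz hfw hfwlast hfz hfzlast
end
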